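/- There is a (computable) translation t mapping each formula of topological public announcement logic to an announcement-free modal formula (built only from propositional letters, ¬, ∧, I) such that for every topological model M and every point s of M, M, s satisfies φ if and only if M, s satisfies t(φ). (Reduction of topological PAL to the basic topological modal logic, the core of the completeness theorem.) -/

import Mathlib

/-- `τ` is a topology on the set `A`: a collection of subsets of `A` containing the
empty set and `A`, closed under arbitrary unions and under (nonempty) finite
intersections. -/
def IsTopologyOn {T : Type} (A : Set T) (τ : Set (Set T)) : Prop :=
  (∀ U ∈ τ, U ⊆ A) ∧ (∅ : Set T) ∈ τ ∧ A ∈ τ ∧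
    (∀ C ⊆ τ, ⋃₀ C ∈ τ) ∧
    (∀ C ⊆ τ, C.Finite → C.Nonempty → ⋂₀ C ∈ τ)

/-- Formulas of topological public announcement logic: propositional letters,
negation, conjunction, the interior modality `I`, and public announcement `[φ]ψ`. -/
inductive TForm where
  | atom : ℕ → TForm
  | neg : TForm → TForm
  | and : TForm → TForm → TForm
  | int : TForm → TForm
  | ann : TForm → TForm → TForm
deriving DecidableEq

/-- Material implication `φ → ψ` as the derived connective `¬(φ ∧ ¬ψ)`. -/
def TForm.imp (φ ψ : TForm) : TForm := .neg (.and φ (.neg ψ))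

/-- A topological model: a carrier set, a collection of subsets of it (intended to be
a topology on the carrier), and a valuation. -/
structure TopModel (T : Type) where
  carrier : Set T
  tau : Set (Set T)
  val : ℕ → Set T

/-- The restriction of a topological model to a subset `A`: carrier `A`, the induced
collection `{O ∩ A : O ∈ τ}`, and valuation `p ↦ v(p) ∩ A`. -/
def TopModel.restrict {T : Type} (M : TopModel T) (A : Set T) : TopModel T where
  carrier := A
  tau := {V | ∃ O ∈ M.tau, V = O ∩ A}
  val := fun p => M.val p ∩ A

/-- Satisfaction `M, t ⊨ φ` in a topological model; announcing `φ` restricts the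
model to the extension `(φ)^M = {u ∈ T : M, u ⊨ φ}`. -/
def TSat {T : Type} : TopModel T → TForm → T → Prop
  | M, .atom p, t => t ∈ M.val p
  | M, .neg φ, t => ¬ TSat M φ t
  | M, .and φ ψ, t => TSat M φ t ∧ TSat M ψ t
  | M, .int φ, t => ∃ U ∈ M.tau, t ∈ U ∧ ∀ u ∈ U, TSat M φ u
  | M, .ann φ ψ, t =>
      TSat M φ t → TSat (M.restrict {u ∈ M.carrier | TSat M φ u}) ψ t
/-- A formula is announcement-free if it contains no public announcement operator. -/
def TForm.annFree : TForm → Prop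
  | .atom _ => True
  | .neg φ => φ.annFree
  | .and φ ψ => φ.annFree ∧ ψ.annFree
  | .int φ => φ.annFree
  | .ann _ _ => False


/-!
Announcements are eliminated from the inside out. Once `ψ` is announcement-free, `[α]ψ` is
pushed through `ψ` by the reduction axioms `[α]p ↔ (α → p)`, `[α]¬ψ ↔ (α → ¬[α]ψ)`,
`[α](ψ ∧ χ) ↔ [α]ψ ∧ [α]χ` and `[α]Iψ ↔ (α → I[α]ψ)`. The last one holds because the
open neighbourhoods of a point in the updated model are exactly the traces `O ∩ (α)^M` of
its open neighbourhoods in `M`. The induction runs over all models whose open sets lie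
inside the carrier, a class closed under announcements.
-/

namespace TForm

/-- An announcement-free formula equivalent to `[α]β` when `β` is announcement-free.
The clause for `.ann` is a placeholder: it is never used on a formula with announcements. -/
def reduceAnn (α : TForm) : TForm → TForm
  | .atom p => α.imp (.atom p)
  | .neg ψ => α.imp (.neg (α.reduceAnn ψ))
  | .and ψ χ => .and (α.reduceAnn ψ) (α.reduceAnn χ)
  | .int ψ => α.imp (.int (α.reduceAnn ψ))
  | .ann ψ χ => .ann ψ χ

def reduce : TForm → TForm
  | .atom p => .atom p
  | .neg φ => .neg φ.reduce
  | .and φ ψ => .and φ.reduce ψ.reduce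
  | .int φ => .int φ.reduce
  | .ann φ ψ => φ.reduce.reduceAnn ψ.reduce

theorem annFree_imp {φ ψ : TForm} (hφ : φ.annFree) (hψ : ψ.annFree) : (φ.imp ψ).annFree :=
  ⟨hφ, hψ⟩

theorem annFree_reduceAnn {α β : TForm} (hα : α.annFree) (hβ : β.annFree) :
    (α.reduceAnn β).annFree := by
  induction β with
  | atom p => exact annFree_imp hα trivial
  | neg ψ ih => exact annFree_imp hα (ih hβ)
  | and ψ χ ihψ ihχ => exact ⟨ihψ hβ.1, ihχ hβ.2⟩
  | int ψ ih => exact annFree_imp hα (ih hβ)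
  | ann ψ χ _ _ => exact hβ.elim

theorem annFree_reduce (φ : TForm) : φ.reduce.annFree := by
  induction φ with
  | atom p => trivial
  | neg φ ih => exact ih
  | and φ ψ ihφ ihψ => exact ⟨ihφ, ihψ⟩
  | int φ ih => exact ih
  | ann φ ψ ihφ ihψ => exact annFree_reduceAnn ihφ ihψ

end TForm

open TForm

section Semantics

variable {T : Type}

theorem TSat_imp (M : TopModel T) (φ ψ : TForm) (t : T) :
    TSat M (φ.imp ψ) t ↔ (TSat M φ t → TSat M ψ t) := by
  simp only [TForm.imp, TSat, not_and, not_not]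

theorem TSat_restrict_int (M : TopModel T) (A : Set T) (φ : TForm) (t : T) :
    TSat (M.restrict A) (.int φ) t ↔
      ∃ O ∈ M.tau, t ∈ O ∧ t ∈ A ∧ ∀ u ∈ O, u ∈ A → TSat (M.restrict A) φ u := by
  simp only [TSat, TopModel.restrict]
  constructor
  · rintro ⟨_, ⟨O, hO, rfl⟩, ⟨htO, htA⟩, hφ⟩
    exact ⟨O, hO, htO, htA, fun u huO huA => hφ u ⟨huO, huA⟩⟩
  · rintro ⟨O, hO, htO, htA, hφ⟩
    exact ⟨O ∩ A, ⟨O, hO, rfl⟩, ⟨htO, htA⟩, fun u hu => hφ u hu.1 hu.2⟩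

theorem TSat_int_congr {M : TopModel T} (hτ : ∀ U ∈ M.tau, U ⊆ M.carrier) {φ ψ : TForm}
    (h : ∀ u ∈ M.carrier, TSat M φ u ↔ TSat M ψ u) (t : T) :
    TSat M (.int φ) t ↔ TSat M (.int ψ) t :=
  exists_congr fun U => and_congr_right fun hU => and_congr_right fun _ =>
    forall₂_congr fun u hu => h u (hτ U hU hu)

theorem TopModel.restrict_tau_subset_carrier (M : TopModel T) (A : Set T) :
    ∀ V ∈ (M.restrict A).tau, V ⊆ (M.restrict A).carrier := by
  rintro _ ⟨O, -, rfl⟩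
  exact Set.inter_subset_right

theorem TSat_reduceAnn {M : TopModel T} (hτ : ∀ U ∈ M.tau, U ⊆ M.carrier) (α : TForm)
    {β : TForm} (hβ : β.annFree) {s : T} (hs : s ∈ M.carrier) :
    TSat M (α.reduceAnn β) s ↔ TSat M (.ann α β) s := by
  set A := {u ∈ M.carrier | TSat M α u}
  change _ ↔ (TSat M α s → TSat (M.restrict A) β s)
  induction β generalizing s with
  | atom p =>
    rw [reduceAnn, TSat_imp]
    exact imp_congr_right fun hα => ⟨fun hp => ⟨hp, hs, hα⟩, And.left⟩
  | neg ψ ih =>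
    rw [reduceAnn, TSat_imp]
    simp only [TSat, ih hβ hs]
    tauto
  | and ψ χ ihψ ihχ =>
    simp only [reduceAnn, TSat, ihψ hβ.1 hs, ihχ hβ.2 hs]
    tauto
  | int ψ ih =>
    rw [reduceAnn, TSat_imp, TSat_restrict_int]
    refine imp_congr_right fun hα => ⟨?_, ?_⟩
    · rintro ⟨O, hO, hsO, hψ⟩
      exact ⟨O, hO, hsO, ⟨hs, hα⟩,
        fun u huO huA => (ih hβ huA.1).1 (hψ u huO) huA.2⟩
    · rintro ⟨O, hO, hsO, -, hψ⟩
      refine ⟨O, hO, hsO, fun u huO => ?_⟩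
      have hu : u ∈ M.carrier := hτ O hO huO
      exact (ih hβ hu).2 fun hα => hψ u huO ⟨hu, hα⟩
  | ann ψ χ _ _ => exact hβ.elim

theorem TSat_reduce (φ : TForm) {M : TopModel T} (hτ : ∀ U ∈ M.tau, U ⊆ M.carrier)
    {s : T} (hs : s ∈ M.carrier) : TSat M φ.reduce s ↔ TSat M φ s := by
  induction φ generalizing M s with
  | atom p => rfl
  | neg φ ih => exact not_congr (ih hτ hs)
  | and φ ψ ihφ ihψ => exact and_congr (ihφ hτ hs) (ihψ hτ hs)
  | int φ ih => exact TSat_int_congr hτ (fun u hu => ih hτ hu) s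
  | ann φ ψ ihφ ihψ =>
    have hext : {u ∈ M.carrier | TSat M φ.reduce u} = {u ∈ M.carrier | TSat M φ u} :=
      Set.sep_ext_iff.2 fun u hu => ihφ hτ hu
    rw [reduce, TSat_reduceAnn hτ _ (annFree_reduce ψ) hs]
    simp only [TSat, hext]
    exact imp_congr_ctx (ihφ hτ hs) fun hφ =>
      ihψ (M.restrict_tau_subset_carrier _)
        (show s ∈ {u ∈ M.carrier | TSat M φ u} from ⟨hs, hφ⟩)

end Semantics

/-- Reduction of topological PAL to basic topological modal logic: there is a
translation `t` sending each formula to an announcement-free formula which is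
satisfied at exactly the same points of every topological model. -/
theorem topological_pal_reduction :
    ∃ t : TForm → TForm, ∀ φ : TForm, (t φ).annFree ∧
      ∀ (T : Type) (M : TopModel T), IsTopologyOn M.carrier M.tau →
        ∀ s ∈ M.carrier, (TSat M φ s ↔ TSat M (t φ) s) :=
  ⟨reduce, fun φ => ⟨annFree_reduce φ, fun _ _ hM _ hs => (TSat_reduce φ hM.1 hs).symm⟩⟩
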